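/- arXiv:1006.1818 — 3 statements merged into one kernel-verified Lean document; each statement's English description precedes it below -/
import Mathlib

section
/- Let D ⊆ ℝ^n be Clarke regular at x̄ ∈ D, and let f : ℝ^n → ℝ be locally Lipschitz and subdifferentially regular at x̄. If there exists c ∈ ∂f(x̄) with −c ∈ int(N_D(x̄)), then x̄ is a strict local minimizer of the problem min{ f(x) : x ∈ D }; in fact there exist δ > 0 and a neighborhood O of x̄ such that f(x) ≥ f(x̄) + (δ/4)|x − x̄| for all x ∈ D ∩ O. -/
open Set Filter Topology Matrix Bornology Asymptotics Pointwise

noncomputable section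

/-- The (Bouligand) tangent cone of `C` at `xbar`:
`w` is tangent if `(xⱼ - xbar)/tⱼ → w` for some `xⱼ ∈ C`, `xⱼ → xbar`, `tⱼ ↓ 0`. -/
def tanCone {k : ℕ} (C : Set (Fin k → ℝ)) (xbar : Fin k → ℝ) : Set (Fin k → ℝ) :=
  {w | ∃ (xs : ℕ → Fin k → ℝ) (ts : ℕ → ℝ),
    (∀ j, xs j ∈ C) ∧ (∀ j, 0 < ts j) ∧
    Tendsto ts atTop (𝓝 0) ∧ Tendsto xs atTop (𝓝 xbar) ∧
    Tendsto (fun j => (ts j)⁻¹ • (xs j - xbar)) atTop (𝓝 w)}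

/-- Regular normals: `v ⬝ (x - xbar) ≤ o(‖x - xbar‖)` for `x ∈ C`. -/
def regNormal {k : ℕ} (C : Set (Fin k → ℝ)) (xbar : Fin k → ℝ) : Set (Fin k → ℝ) :=
  {v | ∀ ε > 0, ∃ δ > 0, ∀ x ∈ C, ‖x - xbar‖ < δ → v ⬝ᵥ (x - xbar) ≤ ε * ‖x - xbar‖}

/-- General normals: limits of regular normals at nearby points of `C`. -/
def genNormal {k : ℕ} (C : Set (Fin k → ℝ)) (xbar : Fin k → ℝ) : Set (Fin k → ℝ) :=
  {v | ∃ xs vs : ℕ → Fin k → ℝ, (∀ j, xs j ∈ C) ∧ (∀ j, vs j ∈ regNormal C (xs j)) ∧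
    Tendsto xs atTop (𝓝 xbar) ∧ Tendsto vs atTop (𝓝 v)}

/-- Clarke regularity: local closedness at `xbar` and all normals are regular. -/
def ClarkeRegularAt {k : ℕ} (C : Set (Fin k → ℝ)) (xbar : Fin k → ℝ) : Prop :=
  (∃ U ∈ 𝓝 xbar, IsClosed (C ∩ U)) ∧ genNormal C xbar = regNormal C xbar

/-- Regular (Fréchet) subgradients: `f x ≥ f xbar + v ⬝ (x - xbar) + o(‖x - xbar‖)`. -/
def regSubgrad {k : ℕ} (f : (Fin k → ℝ) → ℝ) (xbar : Fin k → ℝ) : Set (Fin k → ℝ) :=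
  {v | ∀ ε > 0, ∃ δ > 0, ∀ x, ‖x - xbar‖ < δ → f xbar + v ⬝ᵥ (x - xbar) - ε * ‖x - xbar‖ ≤ f x}

/-- General subgradients: limits of regular subgradients along `xⱼ → xbar`, `f xⱼ → f xbar`. -/
def genSubgrad {k : ℕ} (f : (Fin k → ℝ) → ℝ) (xbar : Fin k → ℝ) : Set (Fin k → ℝ) :=
  {v | ∃ xs vs : ℕ → Fin k → ℝ, Tendsto xs atTop (𝓝 xbar) ∧
    Tendsto (fun j => f (xs j)) atTop (𝓝 (f xbar)) ∧
    (∀ j, vs j ∈ regSubgrad f (xs j)) ∧ Tendsto vs atTop (𝓝 v)}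

/-- Subdifferential regularity: the general and regular subdifferentials agree. -/
def SubdiffRegularAt {k : ℕ} (f : (Fin k → ℝ) → ℝ) (xbar : Fin k → ℝ) : Prop :=
  genSubgrad f xbar = regSubgrad f xbar

/-- `f` is locally Lipschitz at `xbar`. -/
def LocLipschitzAt {k : ℕ} (f : (Fin k → ℝ) → ℝ) (xbar : Fin k → ℝ) : Prop :=
  ∃ K : NNReal, ∃ s ∈ 𝓝 xbar, LipschitzOnWith K f s

/-- The subderivative `df(xbar)(w) = liminf_{τ↓0} (f(xbar+τw) - f(xbar))/τ`. -/
def subderiv {k : ℕ} (f : (Fin k → ℝ) → ℝ) (xbar w : Fin k → ℝ) : ℝ :=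
  Filter.liminf (fun τ : ℝ => (f (xbar + τ • w) - f xbar) / τ) (𝓝[>] (0:ℝ))

/-- Strict minimizers (Lemma `lem:strict-loc-min`). -/
theorem strict_minimizers
    {n : ℕ} (D : Set (Fin n → ℝ)) (xbar : Fin n → ℝ) (hxbar : xbar ∈ D)
    (hreg : ClarkeRegularAt D xbar)
    (f : (Fin n → ℝ) → ℝ)
    (hlip : LocLipschitzAt f xbar) (hsreg : SubdiffRegularAt f xbar)
    (c : Fin n → ℝ) (hc : c ∈ genSubgrad f xbar)
    (hcN : -c ∈ interior (genNormal D xbar)) :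
    ∃ δ > (0:ℝ), ∃ O ∈ 𝓝 xbar,
      (∀ x ∈ D ∩ O, f xbar + (δ / 4) * ‖x - xbar‖ ≤ f x) ∧
      ∀ x ∈ D ∩ O, x ≠ xbar → f xbar < f x := by
  -- degenerate case n = 0
  rcases Nat.eq_zero_or_pos n with hn | hn
  · subst hn
    refine ⟨1, one_pos, Set.univ, Filter.univ_mem, ?_, ?_⟩
    · intro x hx
      rw [Subsingleton.elim x xbar, sub_self, norm_zero]
      simp
    · intro x hx hne
      exact absurd (Subsingleton.elim _ _) hne
  -- extract a ball around -c inside the regular normal cone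
  obtain ⟨r, hr, hball⟩ := Metric.mem_nhds_iff.mp (mem_interior_iff_mem_nhds.mp hcN)
  set δ : ℝ := r / 2 with hδdef
  have hδ : 0 < δ := by positivity
  have hNeq := hreg.2
  have hv : ∀ (i : Fin n) (σ : ℝ), |σ| = 1 →
      (-c + (σ * δ) • (Pi.single i 1 : Fin n → ℝ)) ∈ regNormal D xbar := by
    intro i σ hσ
    rw [← hNeq]
    apply hball
    rw [Metric.mem_ball, dist_eq_norm]
    have : -c + (σ * δ) • (Pi.single i 1 : Fin n → ℝ) - -c = (σ * δ) • (Pi.single i 1 : Fin n → ℝ) := by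
      abel
    rw [this, norm_smul, Pi.norm_single]
    simp only [Real.norm_eq_abs, abs_mul, hσ, norm_one]
    rw [abs_of_pos hδ]
    simp only [hδdef]
    linarith
  have hA : ∀ (i : Fin n) (σ : ℝ), |σ| = 1 →
      ∀ᶠ x in 𝓝 xbar, x ∈ D →
        (-c + (σ * δ) • (Pi.single i 1 : Fin n → ℝ)) ⬝ᵥ (x - xbar) ≤ (δ / 4) * ‖x - xbar‖ := by
    intro i σ hσ
    obtain ⟨ρ, hρ, h⟩ := hv i σ hσ (δ / 4) (by positivity)
    filter_upwards [Metric.ball_mem_nhds xbar hρ] with x hx hxD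
    exact h x hxD (by simpa [dist_eq_norm] using hx)
  have hkey : ∀ᶠ x in 𝓝 xbar, x ∈ D →
      (3 * δ / 4) * ‖x - xbar‖ ≤ c ⬝ᵥ (x - xbar) := by
    have hall : ∀ᶠ x in 𝓝 xbar, ∀ i : Fin n, x ∈ D →
        ((-c + (1 * δ) • (Pi.single i 1 : Fin n → ℝ)) ⬝ᵥ (x - xbar) ≤ (δ / 4) * ‖x - xbar‖) ∧
        ((-c + ((-1) * δ) • (Pi.single i 1 : Fin n → ℝ)) ⬝ᵥ (x - xbar) ≤ (δ / 4) * ‖x - xbar‖) := by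
      rw [Filter.eventually_all]
      intro i
      filter_upwards [hA i 1 (by norm_num), hA i (-1) (by norm_num)] with x h1 h2 hxD
      exact ⟨h1 hxD, h2 hxD⟩
    filter_upwards [hall] with x hx hxD
    set z := x - xbar with hz
    have hco : ∀ i : Fin n, |z i| ≤ (c ⬝ᵥ z + (δ / 4) * ‖z‖) / δ := by
      intro i
      obtain ⟨h1, h2⟩ := hx i hxD
      rw [add_dotProduct, neg_dotProduct, smul_dotProduct,
        single_dotProduct, smul_eq_mul] at h1 h2
      rw [le_div_iff₀ hδ]
      rcases abs_cases (z i) with ⟨he, _⟩ | ⟨he, _⟩ <;> rw [he] <;> nlinarith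
    have hi0 : (0:ℝ) ≤ (c ⬝ᵥ z + (δ / 4) * ‖z‖) / δ :=
      le_trans (abs_nonneg _) (hco ⟨0, hn⟩)
    have hnle : ‖z‖ ≤ (c ⬝ᵥ z + (δ / 4) * ‖z‖) / δ := by
      rw [pi_norm_le_iff_of_nonneg hi0]
      intro i
      simpa [Real.norm_eq_abs] using hco i
    rw [le_div_iff₀ hδ] at hnle
    nlinarith
  -- subgradient inequality
  have hc' : c ∈ regSubgrad f xbar := hsreg ▸ hc
  obtain ⟨ρ', hρ', hsub⟩ := hc' (δ / 4) (by positivity)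
  have hB : ∀ᶠ x in 𝓝 xbar,
      f xbar + c ⬝ᵥ (x - xbar) - (δ / 4) * ‖x - xbar‖ ≤ f x := by
    filter_upwards [Metric.ball_mem_nhds xbar hρ'] with x hx
    exact hsub x (by simpa [dist_eq_norm] using hx)
  obtain ⟨O, hO, hprop⟩ := Filter.eventually_iff_exists_mem.mp (hkey.and hB)
  refine ⟨δ, hδ, O, hO, ?_, ?_⟩
  · rintro x ⟨hxD, hxO⟩
    obtain ⟨h1, h2⟩ := hprop x hxO
    have h1' := h1 hxD
    have hnn : (0:ℝ) ≤ ‖x - xbar‖ := norm_nonneg _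
    nlinarith
  · rintro x ⟨hxD, hxO⟩ hne
    obtain ⟨h1, h2⟩ := hprop x hxO
    have h1' := h1 hxD
    have hpos : (0:ℝ) < ‖x - xbar‖ := by
      rw [norm_pos_iff]
      exact sub_ne_zero.mpr hne
    nlinarith
end
end

section
/- Let D ⊆ ℝ^n be Clarke regular at x̄ ∈ D, and let f : ℝ^n → ℝ be continuously differentiable at x̄ with ∇f(x̄) ≠ 0 and −∇f(x̄) ∈ N_D(x̄) (this last condition holds whenever x̄ is a local minimizer of min{ f(x) : x ∈ D }). Then the following two conditions are equivalent: (i) −∇f(x̄) ∈ int(N_D(x̄)); (ii) {∇f(x̄)}^⊥ ∩ T_D(x̄) = {0}, where {∇f(x̄)}^⊥ = { w : ∇f(x̄)^T w = 0 }. -/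
open Set Filter Topology Matrix Bornology Asymptotics Pointwise

noncomputable section

/-!
Normals of a Clarke regular set are regular normals, and in finite dimension the regular normals
are exactly the polar `T°` of the tangent cone `T`, which is a closed cone; so the question is
when `-g ∈ T°` is interior to `T°`. If some `w ≠ 0` in `T` is orthogonal to `g`, then `-g + c • w`
leaves `T°` for every `c > 0`. Conversely, if `g` is strictly positive on the compact set
`T ∩ {‖w‖ = 1}`, it stays so for all nearby vectors, which therefore remain in `T°`.
-/

def polarCone {ι : Type*} [Fintype ι] (K : Set (ι → ℝ)) : Set (ι → ℝ) :=
  {v | ∀ w ∈ K, v ⬝ᵥ w ≤ 0}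

section PolarCone

variable {ι : Type*} [Fintype ι] {K : Set (ι → ℝ)} {v w : ι → ℝ}

lemma eq_zero_of_mem_interior_polarCone (hv : v ∈ interior (polarCone K)) (hw : w ∈ K)
    (hvw : v ⬝ᵥ w = 0) : w = 0 := by
  by_contra hw0
  have hperturb : Tendsto (fun c : ℝ => v + c • w) (𝓝[>] 0) (𝓝 v) := by
    have : Continuous fun c : ℝ => v + c • w := by fun_prop
    simpa using (this.tendsto 0).mono_left nhdsWithin_le_nhds
  obtain ⟨c, hc, hcK⟩ :=
    (eventually_mem_nhdsWithin.and (hperturb.eventually (mem_interior_iff_mem_nhds.mp hv))).exists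
  have hww : 0 < w ⬝ᵥ w :=
    (Finset.sum_nonneg fun i _ => mul_self_nonneg (w i)).lt_of_ne'
      (dotProduct_self_eq_zero.not.mpr hw0)
  have := hcK w hw
  rw [add_dotProduct, hvw, smul_dotProduct, smul_eq_mul, zero_add] at this
  exact (mul_pos (mem_Ioi.mp hc) hww).not_ge this

lemma mem_interior_polarCone (hK : IsClosed K) (hcone : ∀ c > (0 : ℝ), ∀ w ∈ K, c • w ∈ K)
    (hv : ∀ w ∈ K, w ≠ 0 → v ⬝ᵥ w < 0) : v ∈ interior (polarCone K) := by
  have hS : IsCompact (K ∩ Metric.sphere 0 1) := (isCompact_sphere 0 1).inter_left hK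
  have hnear : ∀ᶠ v' in 𝓝 v, ∀ u ∈ K ∩ Metric.sphere 0 1, v' ⬝ᵥ u < 0 :=
    hS.eventually_forall_of_forall_eventually fun u hu =>
      (continuous_fst.dotProduct continuous_snd).continuousAt.eventually
        (gt_mem_nhds (hv u hu.1 (ne_zero_of_mem_unit_sphere ⟨u, hu.2⟩)))
  rw [mem_interior_iff_mem_nhds]
  filter_upwards [hnear] with v' hv' w hw
  rcases eq_or_ne w 0 with rfl | hw0
  · simp
  have hnw : 0 < ‖w‖ := norm_pos_iff.mpr hw0
  have hu : ‖w‖⁻¹ • w ∈ K ∩ Metric.sphere 0 1 :=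
    ⟨hcone _ (inv_pos.mpr hnw) w hw, by simp [norm_smul, hnw.ne']⟩
  have := hv' _ hu
  rw [dotProduct_smul, smul_eq_mul] at this
  exact (neg_of_mul_neg_right this (inv_nonneg.mpr hnw.le)).le

theorem mem_interior_polarCone_iff (hK : IsClosed K) (hcone : ∀ c > (0 : ℝ), ∀ w ∈ K, c • w ∈ K)
    (hv : v ∈ polarCone K) : v ∈ interior (polarCone K) ↔ ∀ w ∈ K, v ⬝ᵥ w = 0 → w = 0 :=
  ⟨fun hint _ hw hvw => eq_zero_of_mem_interior_polarCone hint hw hvw,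
    fun hperp => mem_interior_polarCone hK hcone fun w hw hw0 =>
      (hv w hw).lt_of_ne fun hvw => hw0 (hperp w hw hvw)⟩

end PolarCone

section TangentCone

variable {k : ℕ} {C : Set (Fin k → ℝ)} {xbar w : Fin k → ℝ}

lemma zero_mem_tanCone (hxbar : xbar ∈ C) : 0 ∈ tanCone C xbar :=
  ⟨fun _ => xbar, fun j => 1 / (j + 1), fun _ => hxbar, fun _ => Nat.one_div_pos_of_nat,
    tendsto_one_div_add_atTop_nhds_zero_nat, tendsto_const_nhds, by simp⟩

lemma smul_mem_tanCone {c : ℝ} (hc : 0 < c) (hw : w ∈ tanCone C xbar) :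
    c • w ∈ tanCone C xbar := by
  obtain ⟨xs, ts, hC, hpos, hts, hxs, hlim⟩ := hw
  refine ⟨xs, fun j => c⁻¹ * ts j, hC, fun j => mul_pos (inv_pos.mpr hc) (hpos j),
    by simpa using hts.const_mul c⁻¹, hxs, ?_⟩
  refine (hlim.const_smul c).congr fun j => ?_
  rw [_root_.mul_inv_rev, inv_inv, mul_smul, smul_comm]

lemma mem_tanCone_iff : w ∈ tanCone C xbar ↔ ∀ ε > 0, ∃ x ∈ C, ∃ t : ℝ,
    0 < t ∧ t < ε ∧ ‖x - xbar‖ < ε ∧ ‖t⁻¹ • (x - xbar) - w‖ < ε := by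
  constructor
  · rintro ⟨xs, ts, hC, hpos, hts, hxs, hlim⟩ ε hε
    obtain ⟨j, htj, hxj, hwj⟩ := ((hts.eventually (gt_mem_nhds hε)).and
      (((tendsto_iff_norm_sub_tendsto_zero.mp hxs).eventually (gt_mem_nhds hε)).and
        ((tendsto_iff_norm_sub_tendsto_zero.mp hlim).eventually (gt_mem_nhds hε)))).exists
    exact ⟨xs j, hC j, ts j, hpos j, htj, hxj, hwj⟩
  · intro happrox
    choose xs hC ts hpos hts hxs hlim using
      fun j : ℕ => happrox (1 / ((j : ℝ) + 1)) Nat.one_div_pos_of_nat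
    have hzero := tendsto_one_div_add_atTop_nhds_zero_nat (𝕜 := ℝ)
    exact ⟨xs, ts, hC, hpos, squeeze_zero (fun j => (hpos j).le) (fun j => (hts j).le) hzero,
      tendsto_iff_norm_sub_tendsto_zero.mpr (squeeze_zero (fun _ => norm_nonneg _)
        (fun j => (hxs j).le) hzero),
      tendsto_iff_norm_sub_tendsto_zero.mpr (squeeze_zero (fun _ => norm_nonneg _)
        (fun j => (hlim j).le) hzero)⟩

lemma isClosed_tanCone : IsClosed (tanCone C xbar) := by
  refine isClosed_of_closure_subset fun w hw => mem_tanCone_iff.mpr fun ε hε => ?_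
  obtain ⟨w', hw', hww'⟩ := Metric.mem_closure_iff.mp hw (ε / 2) (half_pos hε)
  obtain ⟨x, hx, t, ht, htε, hxε, happrox⟩ := mem_tanCone_iff.mp hw' (ε / 2) (half_pos hε)
  refine ⟨x, hx, t, ht, by linarith, by linarith, ?_⟩
  calc ‖t⁻¹ • (x - xbar) - w‖ ≤ ‖t⁻¹ • (x - xbar) - w'‖ + ‖w' - w‖ :=
        norm_sub_le_norm_sub_add_norm_sub _ _ _
    _ < ε / 2 + ε / 2 := add_lt_add happrox (by rwa [← dist_eq_norm, dist_comm])
    _ = ε := add_halves ε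

lemma exists_mem_tanCone_tendsto_normalize {xs : ℕ → Fin k → ℝ} (hC : ∀ j, xs j ∈ C)
    (hne : ∀ j, xs j ≠ xbar) (hlim : Tendsto xs atTop (𝓝 xbar)) :
    ∃ u ∈ tanCone C xbar, ∃ φ : ℕ → ℕ, StrictMono φ ∧
      Tendsto (fun j => ‖xs (φ j) - xbar‖⁻¹ • (xs (φ j) - xbar)) atTop (𝓝 u) := by
  have hdist : ∀ j, 0 < ‖xs j - xbar‖ := fun j => norm_pos_iff.mpr (sub_ne_zero.mpr (hne j))
  have hsphere : ∀ j, ‖xs j - xbar‖⁻¹ • (xs j - xbar) ∈ Metric.sphere 0 1 := fun j => by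
    simp [norm_smul, (hdist j).ne']
  obtain ⟨u, -, φ, hφ, hu⟩ := (isCompact_sphere 0 1).tendsto_subseq hsphere
  exact ⟨u, ⟨xs ∘ φ, fun j => ‖xs (φ j) - xbar‖, fun j => hC _, fun j => hdist _,
    (tendsto_iff_norm_sub_tendsto_zero.mp hlim).comp hφ.tendsto_atTop,
    hlim.comp hφ.tendsto_atTop, hu⟩, φ, hφ, hu⟩

end TangentCone

section RegularNormal

variable {k : ℕ} {C : Set (Fin k → ℝ)} {xbar v w : Fin k → ℝ}

lemma dotProduct_nonpos_of_mem_regNormal (hv : v ∈ regNormal C xbar)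
    (hw : w ∈ tanCone C xbar) : v ⬝ᵥ w ≤ 0 := by
  obtain ⟨xs, ts, hC, hpos, -, hxs, hlim⟩ := hw
  have hbound : ∀ ε > 0, v ⬝ᵥ w ≤ ε * ‖w‖ := by
    intro ε hε
    obtain ⟨δ, hδ, hvδ⟩ := hv ε hε
    refine le_of_tendsto_of_tendsto
      (((continuous_const.dotProduct continuous_id').tendsto w).comp hlim)
      (hlim.norm.const_mul ε) ?_
    filter_upwards [(tendsto_iff_norm_sub_tendsto_zero.mp hxs).eventually (gt_mem_nhds hδ)]
      with j hj
    simp only [Function.comp_apply, dotProduct_smul, smul_eq_mul, norm_smul, norm_inv,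
      Real.norm_eq_abs, abs_of_pos (hpos j), mul_left_comm ε]
    exact mul_le_mul_of_nonneg_left (hvδ _ (hC j) hj) (inv_nonneg.mpr (hpos j).le)
  have hsmall : Tendsto (fun ε : ℝ => ε * ‖w‖) (𝓝[>] 0) (𝓝 0) := by
    simpa using ((continuous_mul_const ‖w‖).tendsto 0).mono_left nhdsWithin_le_nhds
  exact ge_of_tendsto hsmall (eventually_mem_nhdsWithin.mono hbound)

lemma mem_regNormal_of_forall_dotProduct_nonpos (h : ∀ w ∈ tanCone C xbar, v ⬝ᵥ w ≤ 0) :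
    v ∈ regNormal C xbar := by
  by_contra hv
  simp only [regNormal, mem_ofPred_eq] at hv
  push Not at hv
  obtain ⟨ε, hε, hfar⟩ := hv
  choose xs hC hclose hbad using fun j : ℕ => hfar (1 / ((j : ℝ) + 1)) Nat.one_div_pos_of_nat
  have hne : ∀ j, xs j ≠ xbar := fun j hj => by simpa [hj] using hbad j
  have hlim : Tendsto xs atTop (𝓝 xbar) :=
    tendsto_iff_norm_sub_tendsto_zero.mpr (squeeze_zero (fun _ => norm_nonneg _)
      (fun j => (hclose j).le) tendsto_one_div_add_atTop_nhds_zero_nat)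
  obtain ⟨u, hu, φ, -, hφu⟩ := exists_mem_tanCone_tendsto_normalize hC hne hlim
  have hε_le : ∀ j, ε ≤ v ⬝ᵥ (‖xs (φ j) - xbar‖⁻¹ • (xs (φ j) - xbar)) := fun j => by
    have hdist : 0 < ‖xs (φ j) - xbar‖ := norm_pos_iff.mpr (sub_ne_zero.mpr (hne _))
    rw [dotProduct_smul, smul_eq_mul, le_inv_mul_iff₀ hdist, mul_comm]
    exact (hbad _).le
  have := ge_of_tendsto' (((continuous_const.dotProduct continuous_id').tendsto u).comp hφu) hε_le
  linarith [h u hu]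

theorem regNormal_eq_polarCone_tanCone : regNormal C xbar = polarCone (tanCone C xbar) :=
  Set.ext fun _ => ⟨fun hv _ hw => dotProduct_nonpos_of_mem_regNormal hv hw,
    mem_regNormal_of_forall_dotProduct_nonpos⟩

end RegularNormal

theorem equivalence_of_strict_minimizer_condition_general
    {n : ℕ} (D : Set (Fin n → ℝ)) (xbar : Fin n → ℝ) (hxbar : xbar ∈ D)
    (hreg : ClarkeRegularAt D xbar)
    (g : Fin n → ℝ) (hgN : -g ∈ genNormal D xbar) :
    -g ∈ interior (genNormal D xbar) ↔
      {w : Fin n → ℝ | g ⬝ᵥ w = 0} ∩ tanCone D xbar = {0} := by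
  rw [hreg.2, regNormal_eq_polarCone_tanCone] at hgN ⊢
  rw [mem_interior_polarCone_iff isClosed_tanCone (fun _ hc _ hw => smul_mem_tanCone hc hw) hgN,
    eq_singleton_iff_unique_mem]
  simp only [neg_dotProduct, neg_eq_zero, mem_inter_iff, mem_ofPred_eq, dotProduct_zero,
    true_and, zero_mem_tanCone hxbar, and_imp]
  exact forall_congr' fun _ => Imp.swap

/-- Equivalence of the strict minimizer condition
(Lemma `lem:equiv-strict`). -/
theorem equivalence_of_strict_minimizer_condition
    {n : ℕ} (D : Set (Fin n → ℝ)) (xbar : Fin n → ℝ) (hxbar : xbar ∈ D)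
    (hreg : ClarkeRegularAt D xbar)
    (f : (Fin n → ℝ) → ℝ) (hC1 : ContDiffAt ℝ 1 f xbar)
    -- `g` is the gradient of `f` at `xbar`
    (g : Fin n → ℝ) (hg : ∀ w, fderiv ℝ f xbar w = g ⬝ᵥ w)
    (hg0 : g ≠ 0) (hgN : -g ∈ genNormal D xbar) :
    -g ∈ interior (genNormal D xbar) ↔
      {w : Fin n → ℝ | g ⬝ᵥ w = 0} ∩ tanCone D xbar = {0} :=
  equivalence_of_strict_minimizer_condition_general D xbar hxbar hreg g hgN
end
end

section
/- Consider the tangential problem with linear programming structure: for an uncertainty set ΔU of pairs (ΔA, Δb) ∈ ℝ^{n×n} × ℝ^n, define v(ΔU) := min{ c^T γ : Ā γ + ((ΔA)x̄ − Δb) ≤ 0 componentwise for all (ΔA, Δb) ∈ ΔU }. Assume Ā ∈ ℝ^{n×n} is square and invertible, and that −c = Σ_{i=1}^n λ_i Ā_i^T for some scalars λ_i > 0, where Ā_i denotes the i-th row of Ā. Then for any nonempty compact uncertainty sets ΔS_1 and ΔS_2, v(ΔS_1 + ΔS_2) = v(ΔS_1) + v(ΔS_2), where ΔS_1 + ΔS_2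 is the Minkowski sum. -/
open Set Filter Topology Matrix Bornology Asymptotics Pointwise

noncomputable section

/-!
When `A` is invertible and `-c` is a positive combination `λ ᵥ* A` of its rows, the linear program
`min c ⬝ᵥ γ` subject to `A *ᵥ γ ≤ w` is solved by `A⁻¹ *ᵥ w`: every feasible `γ` has
`c ⬝ᵥ γ = -(λ ⬝ᵥ A *ᵥ γ) ≥ -(λ ⬝ᵥ w)`. So its value is linear in `w`. For a nonempty compact
uncertainty set, the robust constraints collapse to `A *ᵥ γ ≤ w` where `-wᵢ` is the supremum over the
set of a linear functional, and such suprema are additive under Minkowski sums.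
-/

lemma isLeast_dotProduct_of_mulVec_le {ι : Type*} [Fintype ι] [DecidableEq ι]
    (A : Matrix ι ι ℝ) (hA : IsUnit A.det) {c lam : ι → ℝ} (hlam : 0 ≤ lam) (hc : -c = lam ᵥ* A)
    (w : ι → ℝ) :
    IsLeast ((c ⬝ᵥ ·) '' {γ | A *ᵥ γ ≤ w}) (c ⬝ᵥ (A⁻¹ *ᵥ w)) := by
  have hcγ : ∀ γ, c ⬝ᵥ γ = -(lam ⬝ᵥ A *ᵥ γ) := fun γ => by
    rw [dotProduct_mulVec, ← hc, neg_dotProduct, neg_neg]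
  have hsol : A *ᵥ (A⁻¹ *ᵥ w) = w := by rw [mulVec_mulVec, mul_nonsing_inv A hA, one_mulVec]
  refine ⟨⟨A⁻¹ *ᵥ w, hsol.le, rfl⟩, ?_⟩
  rintro _ ⟨γ, hγ, rfl⟩
  change c ⬝ᵥ _ ≤ c ⬝ᵥ γ
  rw [hcγ, hcγ, hsol, neg_le_neg_iff]
  exact dotProduct_le_dotProduct_of_nonneg_left hγ hlam

section RobustLinearConstraints

variable {ι κ : Type*} [Fintype κ]

def constraintShift (xbar : κ → ℝ) (i : ι) : Matrix ι κ ℝ × (ι → ℝ) →ₗ[ℝ] ℝ where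
  toFun u := u.1 i ⬝ᵥ xbar - u.2 i
  map_add' p q := by
    change (p.1 i + q.1 i) ⬝ᵥ xbar - (p.2 i + q.2 i) = _
    rw [add_dotProduct]
    ring
  map_smul' r p := by
    change (r • p.1 i) ⬝ᵥ xbar - r * p.2 i = r * (p.1 i ⬝ᵥ xbar - p.2 i)
    rw [smul_dotProduct, smul_eq_mul]
    ring

@[simp]
lemma constraintShift_apply (xbar : κ → ℝ) (i : ι) (u : Matrix ι κ ℝ × (ι → ℝ)) :
    constraintShift xbar i u = u.1 i ⬝ᵥ xbar - u.2 i :=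
  rfl

/-- `-worstCaseShift xbar U` is the right-hand side `w(ΔU)` of the robust constraints. -/
def worstCaseShift (xbar : κ → ℝ) (U : Set (Matrix ι κ ℝ × (ι → ℝ))) : ι → ℝ :=
  fun i => sSup (constraintShift xbar i '' U)

variable [Fintype ι] {xbar : κ → ℝ} {U V : Set (Matrix ι κ ℝ × (ι → ℝ))}

lemma bddAbove_image_constraintShift (hU : IsCompact U) (i : ι) :
    BddAbove (constraintShift xbar i '' U) :=
  (hU.image (constraintShift xbar i).continuous_of_finiteDimensional).bddAbove

lemma worstCaseShift_add (hUne : U.Nonempty) (hVne : V.Nonempty) (hU : IsCompact U)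
    (hV : IsCompact V) :
    worstCaseShift xbar (U + V) = worstCaseShift xbar U + worstCaseShift xbar V := by
  funext i
  simp only [worstCaseShift, Pi.add_apply, image_add]
  exact csSup_add (hUne.image _) (bddAbove_image_constraintShift hU i) (hVne.image _)
    (bddAbove_image_constraintShift hV i)

lemma setOf_robust_feasible_eq (A : Matrix ι κ ℝ) (hUne : U.Nonempty) (hU : IsCompact U) :
    {γ | ∀ u ∈ U, ∀ i, A i ⬝ᵥ γ + (u.1 i ⬝ᵥ xbar - u.2 i) ≤ 0} =
      {γ | A *ᵥ γ ≤ -worstCaseShift xbar U} := by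
  ext γ
  have hrow : ∀ i, (A *ᵥ γ) i = A i ⬝ᵥ γ := fun _ => rfl
  simp only [mem_ofPred_eq, Pi.le_def, Pi.neg_apply, worstCaseShift, le_neg, hrow,
    csSup_le_iff (bddAbove_image_constraintShift hU _) (hUne.image _), forall_mem_image,
    constraintShift_apply]
  refine ⟨fun h i u hu => ?_, fun h u hu i => ?_⟩
  · linarith [h u hu i]
  · linarith [h i hu]

end RobustLinearConstraints

/-- Set addition in nondegenerate linear programming
(Proposition `pro:set-add-nice`). -/
theorem set_addition_in_nondegenerate_linear_programming
    {n : ℕ} (A : Matrix (Fin n) (Fin n) ℝ) (hA : IsUnit A.det)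
    (xbar c : Fin n → ℝ)
    -- `-c` is a strictly positive combination of the rows of `A`
    (lam : Fin n → ℝ) (hlam : ∀ i, 0 < lam i) (hc : -c = ∑ i, lam i • A i)
    -- the optimal value of the tangential problem with uncertainty set `U`
    (v : Set (Matrix (Fin n) (Fin n) ℝ × (Fin n → ℝ)) → ℝ)
    (hv : ∀ U, v U = sInf ((fun γ => c ⬝ᵥ γ) ''
      {γ | ∀ u ∈ U, ∀ i, A i ⬝ᵥ γ + (u.1 i ⬝ᵥ xbar - u.2 i) ≤ 0}))
    (ΔS₁ ΔS₂ : Set (Matrix (Fin n) (Fin n) ℝ × (Fin n → ℝ)))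
    (h1ne : ΔS₁.Nonempty) (h2ne : ΔS₂.Nonempty)
    (h1c : IsCompact ΔS₁) (h2c : IsCompact ΔS₂) :
    v (ΔS₁ + ΔS₂) = v ΔS₁ + v ΔS₂ := by
  have hc' : -c = lam ᵥ* A := hc.trans (vecMul_eq_sum lam A).symm
  have value : ∀ U, U.Nonempty → IsCompact U →
      v U = c ⬝ᵥ (A⁻¹ *ᵥ -worstCaseShift xbar U) := fun U hUne hU => by
    rw [hv, setOf_robust_feasible_eq A hUne hU]
    exact (isLeast_dotProduct_of_mulVec_le A hA (fun i => (hlam i).le) hc' _).csInf_eq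
  rw [value _ (h1ne.add h2ne) (h1c.add h2c), value _ h1ne h1c, value _ h2ne h2c,
    worstCaseShift_add h1ne h2ne h1c h2c, neg_add, mulVec_add, dotProduct_add]
end
end
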